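/- Let p be a prime, l ≥ 1, let ψ be an additive character of ℚ_p that is trivial on pℤ_p, and let t₁, …, t_{l+1} ∈ ℤ_p. Let I⁺_{Sp} be the set of matrices g ∈ Sp_{2l}(ℚ_p) (with respect to the form J′) with g_{ii} ∈ 1 + pℤ_p for every i, g_{ij} ∈ ℤ_p for i < j, and g_{ij} ∈ pℤ_p for i > j. Then the map χ : I⁺_{Sp} → ℂ^× defined by χ(k) = ψ(t₁·k_{1,2} + t₂·k_{2,3} + ⋯ + t_l·k_{l,l+1} + t_{l+1}·p⁻¹·k_{2l,1}) is a group homomorphism. -/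
import Mathlib

open IsUltrametricDist

section aux
variable {p : ℕ} [Fact p.Prime]

lemma pinv_nonneg' : (0:ℝ) ≤ (p:ℝ)⁻¹ := by positivity

omit [Fact p.Prime] in
lemma pinv_le_one'' (hp : p.Prime) : ((p:ℝ))⁻¹ ≤ 1 := by
  have h1 : 1 ≤ (p:ℝ) := by exact_mod_cast hp.one_lt.le
  exact inv_le_one_of_one_le₀ h1

lemma norm_le_pinv_of_pmul {x : ℚ_[p]} (h : ∃ y : ℤ_[p], x = (p:ℚ_[p]) * (y:ℚ_[p])) :
    ‖x‖ ≤ (p:ℝ)⁻¹ := by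
  obtain ⟨y, rfl⟩ := h
  rw [norm_mul, Padic.norm_p, PadicInt.padic_norm_e_of_padicInt]
  calc (p:ℝ)⁻¹ * ‖y‖ ≤ (p:ℝ)⁻¹ * 1 :=
        mul_le_mul_of_nonneg_left y.norm_le_one pinv_nonneg'
    _ = (p:ℝ)⁻¹ := mul_one _

lemma norm_le_one_of_int {x : ℚ_[p]} (h : ∃ y : ℤ_[p], x = (y:ℚ_[p])) : ‖x‖ ≤ 1 := by
  obtain ⟨y, rfl⟩ := h
  rw [PadicInt.padic_norm_e_of_padicInt]; exact y.norm_le_one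

lemma exists_pmul_of_norm_le {x : ℚ_[p]} (h : ‖x‖ ≤ (p:ℝ)⁻¹) :
    ∃ y : ℤ_[p], x = (p:ℚ_[p]) * (y:ℚ_[p]) := by
  have hp0 : (p:ℚ_[p]) ≠ 0 := by
    exact_mod_cast (Nat.cast_ne_zero (R := ℚ_[p])).mpr (Fact.out : p.Prime).ne_zero
  have hnorm : ‖x / (p:ℚ_[p])‖ ≤ 1 := by
    rw [norm_div, Padic.norm_p]
    have hp : (0:ℝ) < (p:ℝ) := by exact_mod_cast (Fact.out : p.Prime).pos
    rw [div_le_one (by positivity)]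
    exact h
  exact ⟨⟨x / (p:ℚ_[p]), hnorm⟩, by field_simp⟩

/-- Superdiagonal congruence: `(gh)_{i,i+1} ≡ g_{i,i+1} + h_{i,i+1} mod p`. -/
lemma super_diff {n : ℕ} {g h : Matrix (Fin n) (Fin n) ℚ_[p]}
    (hg2 : ∀ i : Fin n, ∃ y : ℤ_[p], g i i - 1 = (p : ℚ_[p]) * (y : ℚ_[p]))
    (hg3 : ∀ i j : Fin n, (i : ℕ) < (j : ℕ) → ∃ y : ℤ_[p], g i j = (y : ℚ_[p]))
    (hg4 : ∀ i j : Fin n, (j : ℕ) < (i : ℕ) → ∃ y : ℤ_[p], g i j = (p : ℚ_[p]) * (y : ℚ_[p]))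
    (hh2 : ∀ i : Fin n, ∃ y : ℤ_[p], h i i - 1 = (p : ℚ_[p]) * (y : ℚ_[p]))
    (hh3 : ∀ i j : Fin n, (i : ℕ) < (j : ℕ) → ∃ y : ℤ_[p], h i j = (y : ℚ_[p]))
    (hh4 : ∀ i j : Fin n, (j : ℕ) < (i : ℕ) → ∃ y : ℤ_[p], h i j = (p : ℚ_[p]) * (y : ℚ_[p]))
    (i j : Fin n) (hij : (j : ℕ) = (i : ℕ) + 1) :
    ‖(g * h) i j - g i j - h i j‖ ≤ (p:ℝ)⁻¹ := by
  have hij' : i ≠ j := by intro e; rw [e] at hij; omega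
  have key : (g * h) i j - g i j - h i j =
      ∑ k : Fin n, (g i k * h k j - (if k = j then g i j else 0)
        - (if k = i then h i j else 0)) := by
    rw [Finset.sum_sub_distrib, Finset.sum_sub_distrib, ← Matrix.mul_apply]
    simp [Finset.sum_ite_eq']
  rw [key]
  apply norm_sum_le_of_forall_le_of_nonneg pinv_nonneg'
  intro k _
  by_cases hk1 : k = i
  · subst hk1
    have : g k k * h k j - (if k = j then g k j else 0) - (if k = k then h k j else 0)
        = (g k k - 1) * h k j := by
      rw [if_neg hij', if_pos rfl]; ring
    rw [this, norm_mul]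
    calc ‖g k k - 1‖ * ‖h k j‖ ≤ (p:ℝ)⁻¹ * 1 :=
          mul_le_mul (norm_le_pinv_of_pmul (hg2 k))
            (norm_le_one_of_int (hh3 k j (by omega))) (norm_nonneg _) pinv_nonneg'
      _ = (p:ℝ)⁻¹ := mul_one _
  · by_cases hk2 : k = j
    · subst hk2
      have : g i k * h k k - (if k = k then g i k else 0) - (if k = i then h i k else 0)
          = g i k * (h k k - 1) := by
        rw [if_pos rfl, if_neg (by exact fun e => hij' e.symm)]; ring
      rw [this, norm_mul]
      calc ‖g i k‖ * ‖h k k - 1‖ ≤ 1 * (p:ℝ)⁻¹ :=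
            mul_le_mul (norm_le_one_of_int (hg3 i k (by omega)))
              (norm_le_pinv_of_pmul (hh2 k)) (norm_nonneg _) zero_le_one
        _ = (p:ℝ)⁻¹ := one_mul _
    · rw [if_neg hk2, if_neg hk1, sub_zero, sub_zero, norm_mul]
      rcases lt_or_gt_of_ne (fun e : (k:ℕ) = (i:ℕ) => hk1 (Fin.ext e)) with hlt | hgt
      · calc ‖g i k‖ * ‖h k j‖ ≤ (p:ℝ)⁻¹ * 1 :=
              mul_le_mul (norm_le_pinv_of_pmul (hg4 i k hlt))
                (norm_le_one_of_int (hh3 k j (by omega))) (norm_nonneg _) pinv_nonneg'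
          _ = (p:ℝ)⁻¹ := mul_one _
      · have hkj : (j:ℕ) < (k:ℕ) := by
          rcases Nat.lt_or_ge (j:ℕ) (k:ℕ) with h' | h'
          · exact h'
          · exfalso; apply hk2; apply Fin.ext; omega
        calc ‖g i k‖ * ‖h k j‖ ≤ 1 * (p:ℝ)⁻¹ :=
              mul_le_mul (norm_le_one_of_int (hg3 i k hgt))
                (norm_le_pinv_of_pmul (hh4 k j hkj)) (norm_nonneg _) zero_le_one
          _ = (p:ℝ)⁻¹ := one_mul _

/-- Corner congruence: `(gh)_{n-1,0} ≡ g_{n-1,0} + h_{n-1,0} mod p²`. -/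
lemma corner_diff {n : ℕ} {g h : Matrix (Fin n) (Fin n) ℚ_[p]}
    (hg2 : ∀ i : Fin n, ∃ y : ℤ_[p], g i i - 1 = (p : ℚ_[p]) * (y : ℚ_[p]))
    (hg4 : ∀ i j : Fin n, (j : ℕ) < (i : ℕ) → ∃ y : ℤ_[p], g i j = (p : ℚ_[p]) * (y : ℚ_[p]))
    (hh2 : ∀ i : Fin n, ∃ y : ℤ_[p], h i i - 1 = (p : ℚ_[p]) * (y : ℚ_[p]))
    (hh4 : ∀ i j : Fin n, (j : ℕ) < (i : ℕ) → ∃ y : ℤ_[p], h i j = (p : ℚ_[p]) * (y : ℚ_[p]))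
    (a b : Fin n) (ha : (a : ℕ) = n - 1) (hb : (b : ℕ) = 0) (hab : a ≠ b) :
    ‖(g * h) a b - g a b - h a b‖ ≤ (p:ℝ)⁻¹ * (p:ℝ)⁻¹ := by
  have key : (g * h) a b - g a b - h a b =
      ∑ k : Fin n, (g a k * h k b - (if k = b then g a b else 0)
        - (if k = a then h a b else 0)) := by
    rw [Finset.sum_sub_distrib, Finset.sum_sub_distrib, ← Matrix.mul_apply]
    simp [Finset.sum_ite_eq']
  rw [key]
  apply norm_sum_le_of_forall_le_of_nonneg (by positivity)
  intro k _
  have hba : (b:ℕ) < (a:ℕ) := by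
    have := Fin.val_ne_of_ne hab; omega
  by_cases hk1 : k = a
  · subst hk1
    have : g k k * h k b - (if k = b then g k b else 0) - (if k = k then h k b else 0)
        = (g k k - 1) * h k b := by
      rw [if_neg hab, if_pos rfl]; ring
    rw [this, norm_mul]
    exact mul_le_mul (norm_le_pinv_of_pmul (hg2 k))
      (norm_le_pinv_of_pmul (hh4 k b hba)) (norm_nonneg _) pinv_nonneg'
  · by_cases hk2 : k = b
    · subst hk2
      have : g a k * h k k - (if k = k then g a k else 0) - (if k = a then h a k else 0)
          = g a k * (h k k - 1) := by
        rw [if_pos rfl, if_neg (fun e => hab e.symm)]; ring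
      rw [this, norm_mul]
      exact mul_le_mul (norm_le_pinv_of_pmul (hg4 a k hba))
        (norm_le_pinv_of_pmul (hh2 k)) (norm_nonneg _) pinv_nonneg'
    · rw [if_neg hk2, if_neg hk1, sub_zero, sub_zero, norm_mul]
      have hka : (k:ℕ) < (a:ℕ) := by
        have h1 := Fin.val_ne_of_ne hk1
        have := k.isLt; omega
      have hbk : (b:ℕ) < (k:ℕ) := by
        have h2 := Fin.val_ne_of_ne hk2; omega
      exact mul_le_mul (norm_le_pinv_of_pmul (hg4 a k hka))
        (norm_le_pinv_of_pmul (hh4 k b hbk)) (norm_nonneg _) pinv_nonneg'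

end aux


/-- The `2l × 2l` anti-diagonal matrix `J′` over `ℚ_p` whose `(i, 2l+1−i)` entry is `1` for
`i ≤ l` and `−1` for `i > l` (1-based indexing). -/
noncomputable def JmatQ (p : ℕ) [Fact p.Prime] (l : ℕ) :
    Matrix (Fin (2 * l)) (Fin (2 * l)) ℚ_[p] :=
  Matrix.of fun i j =>
    if (i : ℕ) + (j : ℕ) = 2 * l - 1 then (if (i : ℕ) < l then 1 else -1) else 0

/-- The pro-unipotent Iwahori subgroup `I⁺_{Sp}` of `Sp_{2l}(ℚ_p)`: symplectic matrices
(for the form `J′`) with diagonal entries in `1 + pℤ_p`, above-diagonal entries in `ℤ_p`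
and below-diagonal entries in `pℤ_p`. -/
def IwahoriPlusSp (p : ℕ) [Fact p.Prime] (l : ℕ)
    (g : Matrix (Fin (2 * l)) (Fin (2 * l)) ℚ_[p]) : Prop :=
  Matrix.transpose g * JmatQ p l * g = JmatQ p l ∧
  (∀ i : Fin (2 * l), ∃ y : ℤ_[p], g i i - 1 = (p : ℚ_[p]) * (y : ℚ_[p])) ∧
  (∀ i j : Fin (2 * l), (i : ℕ) < (j : ℕ) → ∃ y : ℤ_[p], g i j = (y : ℚ_[p])) ∧
  (∀ i j : Fin (2 * l), (j : ℕ) < (i : ℕ) → ∃ y : ℤ_[p], g i j = (p : ℚ_[p]) * (y : ℚ_[p]))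

/-- The affine generic character
`χ(k) = ψ(t₁k₁₂ + ⋯ + t_l k_{l,l+1} + t_{l+1} p⁻¹ k_{2l,1})` on `I⁺_{Sp}`. -/
noncomputable def spChar (p : ℕ) [Fact p.Prime] (l : ℕ) (hl : 1 ≤ l)
    (ψ : AddChar ℚ_[p] ℂˣ) (t : Fin (l + 1) → ℤ_[p])
    (g : Matrix (Fin (2 * l)) (Fin (2 * l)) ℚ_[p]) : ℂˣ :=
  ψ ((∑ i : Fin l,
        ((t ⟨i, by have := i.isLt; omega⟩ : ℚ_[p]) *
          g ⟨i, by have := i.isLt; omega⟩ ⟨(i : ℕ) + 1, by have := i.isLt; omega⟩)) +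
      (t ⟨l, by omega⟩ : ℚ_[p]) * ((p : ℚ_[p]))⁻¹ * g ⟨2 * l - 1, by omega⟩ ⟨0, by omega⟩)

/-- If `ψ` is an additive character of `ℚ_p` trivial on `pℤ_p` and `t₁, …, t_{l+1} ∈ ℤ_p`,
then `χ` is a group homomorphism on `I⁺_{Sp}`. -/
theorem spChar_mul (p : ℕ) [Fact p.Prime] (l : ℕ) (hl : 1 ≤ l)
    (ψ : AddChar ℚ_[p] ℂˣ) (hψ : ∀ x : ℤ_[p], ψ ((p : ℚ_[p]) * (x : ℚ_[p])) = 1)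
    (t : Fin (l + 1) → ℤ_[p])
    (g h : Matrix (Fin (2 * l)) (Fin (2 * l)) ℚ_[p])
    (hg : IwahoriPlusSp p l g) (hh : IwahoriPlusSp p l h) :
    spChar p l hl ψ t (g * h) = spChar p l hl ψ t g * spChar p l hl ψ t h := by
  obtain ⟨-, hg2, hg3, hg4⟩ := hg
  obtain ⟨-, hh2, hh3, hh4⟩ := hh
  have hp : p.Prime := Fact.out
  have hp0 : (0:ℝ) < (p:ℝ) := by exact_mod_cast hp.pos
  set A : Matrix (Fin (2 * l)) (Fin (2 * l)) ℚ_[p] → ℚ_[p] := fun k =>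
    (∑ i : Fin l,
        ((t ⟨i, by have := i.isLt; omega⟩ : ℚ_[p]) *
          k ⟨i, by have := i.isLt; omega⟩ ⟨(i : ℕ) + 1, by have := i.isLt; omega⟩)) +
      (t ⟨l, by omega⟩ : ℚ_[p]) * ((p : ℚ_[p]))⁻¹ * k ⟨2 * l - 1, by omega⟩ ⟨0, by omega⟩
    with hA
  have key : ‖A (g * h) - A g - A h‖ ≤ (p:ℝ)⁻¹ := by
    have e : A (g * h) - A g - A h =
        (∑ i : Fin l,
          ((t ⟨i, by have := i.isLt; omega⟩ : ℚ_[p]) *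
            ((g * h) ⟨i, by have := i.isLt; omega⟩ ⟨(i : ℕ) + 1, by have := i.isLt; omega⟩
             - g ⟨i, by have := i.isLt; omega⟩ ⟨(i : ℕ) + 1, by have := i.isLt; omega⟩
             - h ⟨i, by have := i.isLt; omega⟩ ⟨(i : ℕ) + 1, by have := i.isLt; omega⟩))) +
        (t ⟨l, by omega⟩ : ℚ_[p]) * ((p : ℚ_[p]))⁻¹ *
          ((g * h) ⟨2 * l - 1, by omega⟩ ⟨0, by omega⟩
           - g ⟨2 * l - 1, by omega⟩ ⟨0, by omega⟩
           - h ⟨2 * l - 1, by omega⟩ ⟨0, by omega⟩) := by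
      rw [hA]
      simp only [mul_sub, Finset.sum_sub_distrib]
      ring
    rw [e]
    refine le_trans (IsUltrametricDist.norm_add_le_max _ _) (max_le ?_ ?_)
    · apply norm_sum_le_of_forall_le_of_nonneg pinv_nonneg'
      intro i _
      rw [norm_mul]
      calc ‖((t ⟨i, by have := i.isLt; omega⟩ : ℚ_[p]))‖ * _ ≤ 1 * (p:ℝ)⁻¹ := by
            refine mul_le_mul (norm_le_one_of_int ⟨_, rfl⟩) ?_ (norm_nonneg _) zero_le_one
            exact super_diff hg2 hg3 hg4 hh2 hh3 hh4 _ _ rfl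
        _ = (p:ℝ)⁻¹ := one_mul _
    · rw [norm_mul, norm_mul, norm_inv, Padic.norm_p, inv_inv]
      have hc : ‖(g * h) (⟨2 * l - 1, by omega⟩ : Fin (2*l)) ⟨0, by omega⟩
           - g ⟨2 * l - 1, by omega⟩ ⟨0, by omega⟩
           - h ⟨2 * l - 1, by omega⟩ ⟨0, by omega⟩‖ ≤ (p:ℝ)⁻¹ * (p:ℝ)⁻¹ := by
        refine corner_diff hg2 hg4 hh2 hh4 _ _ rfl rfl ?_
        intro e
        have := congrArg Fin.val e
        simp at this
        omega
      calc ‖((t ⟨l, by omega⟩ : ℚ_[p]))‖ * (p:ℝ) * _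
          ≤ 1 * (p:ℝ) * ((p:ℝ)⁻¹ * (p:ℝ)⁻¹) := by
            refine mul_le_mul (mul_le_mul (norm_le_one_of_int ⟨_, rfl⟩) le_rfl hp0.le
              zero_le_one) hc (norm_nonneg _) (by positivity)
        _ = (p:ℝ)⁻¹ := by field_simp
  obtain ⟨z, hz⟩ := exists_pmul_of_norm_le key
  have hsplit : A (g * h) = A g + A h + (p:ℚ_[p]) * (z:ℚ_[p]) := by
    rw [← hz]; ring
  show ψ (A (g * h)) = ψ (A g) * ψ (A h)
  rw [hsplit, AddChar.map_add_eq_mul, AddChar.map_add_eq_mul, hψ z, mul_one]
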